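/- arXiv:2412.11037 — 2 statements merged into one kernel-verified Lean document; each statement's English description precedes it below -/
import Mathlib

section
/- Let l ≥ 2 and m ≥ 0 be integers, ζ = exp(2πi/l), and q = ⌊m/l⌋. Then ∑_{k=1}^{l-1} ζ^{k·m}/(1 - ζ^{-k}) = -m + (l-1)/2 + l·q, where the identity holds in ℂ (the right-hand side being a real number). -/
open Finset

private lemma denom_ne {l : ℕ} {ζ : ℂ} (hζ : IsPrimitiveRoot ζ l) {k : ℕ}
    (hk : k ∈ Finset.Icc 1 (l - 1)) (hl : 2 ≤ l) : 1 - ζ ^ (-(k : ℤ)) ≠ 0 := by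
  simp only [Finset.mem_Icc] at hk
  have hk1 : ζ ^ k ≠ 1 := hζ.pow_ne_one_of_pos_of_lt (by omega) (by omega)
  have hz : ζ ^ (-(k : ℤ)) = (ζ ^ k)⁻¹ := by
    rw [zpow_neg, zpow_natCast]
  rw [hz, sub_ne_zero]
  exact fun h => hk1 (inv_eq_one.mp h.symm)

private lemma pow_ne_zero_of_prim {l : ℕ} {ζ : ℂ} (hζ : IsPrimitiveRoot ζ l)
    (hl : 2 ≤ l) : ζ ≠ 0 := hζ.ne_zero (by omega)

private lemma inv_denom_rw {ζ : ℂ} (hζ0 : ζ ≠ 0) (k : ℕ) :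
    (1 : ℂ) - (ζ ^ k)⁻¹ = (ζ ^ k - 1) / ζ ^ k := by
  have hpk : ζ ^ k ≠ 0 := pow_ne_zero _ hζ0
  field_simp

private lemma base_case {l : ℕ} (hl : 2 ≤ l) {ζ : ℂ} (hζ : IsPrimitiveRoot ζ l) :
    ∑ k ∈ Finset.Icc 1 (l - 1), (1 : ℂ) / (1 - ζ ^ (-(k : ℤ))) = ((l : ℂ) - 1) / 2 := by
  have hζ0 : ζ ≠ 0 := pow_ne_zero_of_prim hζ hl
  have hrefl : ∑ k ∈ Finset.Icc 1 (l - 1), (1 : ℂ) / (1 - ζ ^ (-(k : ℤ)))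
      = ∑ k ∈ Finset.Icc 1 (l - 1), (1 : ℂ) / (1 - ζ ^ (k : ℕ)) := by
    apply Finset.sum_nbij' (fun k => l - k) (fun k => l - k)
    · intro a ha; simp only [Finset.mem_Icc] at *; omega
    · intro a ha; simp only [Finset.mem_Icc] at *; omega
    · intro a ha; simp only [Finset.mem_Icc] at ha; omega
    · intro a ha; simp only [Finset.mem_Icc] at ha; omega
    · intro a ha
      simp only [Finset.mem_Icc] at ha
      congr 2
      symm
      rw [← zpow_natCast ζ (l - a)]
      have h1 : ((l - a : ℕ) : ℤ) = (l : ℤ) - a := by omega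
      rw [h1, zpow_sub₀ hζ0, zpow_natCast ζ l, hζ.pow_eq_one, zpow_natCast, one_div,
        ← zpow_natCast ζ a, ← zpow_neg]
  have h2 : (2 : ℂ) * ∑ k ∈ Finset.Icc 1 (l - 1), (1 : ℂ) / (1 - ζ ^ (-(k : ℤ)))
      = ∑ k ∈ Finset.Icc 1 (l - 1),
        ((1 : ℂ) / (1 - ζ ^ (-(k : ℤ))) + 1 / (1 - ζ ^ (k : ℕ))) := by
    rw [Finset.sum_add_distrib, ← hrefl]; ring
  have hterm : ∀ k ∈ Finset.Icc 1 (l - 1),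
      (1 : ℂ) / (1 - ζ ^ (-(k : ℤ))) + 1 / (1 - ζ ^ (k : ℕ)) = 1 := by
    intro k hk
    simp only [Finset.mem_Icc] at hk
    have hk1 : ζ ^ k ≠ 1 := hζ.pow_ne_one_of_pos_of_lt (by omega) (by omega)
    have hz : ζ ^ (-(k : ℤ)) = (ζ ^ k)⁻¹ := by rw [zpow_neg, zpow_natCast]
    have hpk : ζ ^ k ≠ 0 := pow_ne_zero _ hζ0
    have hne2 : ζ ^ k - 1 ≠ 0 := sub_ne_zero.mpr hk1
    have hne3 : (1 : ℂ) - ζ ^ k ≠ 0 := sub_ne_zero.mpr (Ne.symm hk1)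
    rw [hz, inv_denom_rw hζ0, div_div_eq_mul_div, one_mul]
    field_simp
    try ring
  rw [Finset.sum_congr rfl hterm, Finset.sum_const] at h2
  have hcard : (Finset.Icc 1 (l - 1)).card = l - 1 := by
    rw [Nat.card_Icc]; omega
  rw [hcard, nsmul_eq_mul] at h2
  have hc : ((l - 1 : ℕ) : ℂ) = (l : ℂ) - 1 := by
    push_cast [Nat.cast_sub (by omega : 1 ≤ l)]; ring
  rw [hc] at h2
  linear_combination h2 / 2

private lemma key_lemma {l : ℕ} (hl : 2 ≤ l) {ζ : ℂ} (hζ : IsPrimitiveRoot ζ l) :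
    ∀ r : ℕ, r < l →
    ∑ k ∈ Finset.Icc 1 (l - 1), ζ ^ (k * r) / (1 - ζ ^ (-(k : ℤ))) = ((l : ℂ) - 1) / 2 - r := by
  intro r
  induction r with
  | zero =>
    intro _
    simpa using base_case hl hζ
  | succ r ih =>
    intro hr
    have hr' : r < l := by omega
    have hζ0 : ζ ≠ 0 := pow_ne_zero_of_prim hζ hl
    have hx1 : ζ ^ (r + 1) ≠ 1 := hζ.pow_ne_one_of_pos_of_lt (by omega) (by omega)
    have hgeom : ∑ k ∈ Finset.range l, (ζ ^ (r + 1)) ^ k = 0 := by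
      rw [geom_sum_eq hx1]
      rw [← pow_mul, mul_comm, pow_mul, hζ.pow_eq_one, one_pow]
      simp
    have hIcc : Finset.Icc 1 (l - 1) = Finset.Ico 1 l := by
      ext x; simp only [Finset.mem_Icc, Finset.mem_Ico]; omega
    have hsum1 : ∑ k ∈ Finset.Icc 1 (l - 1), ζ ^ (k * (r + 1)) = -1 := by
      rw [Finset.range_eq_Ico, Finset.sum_eq_sum_Ico_succ_bot (by omega : 0 < l)] at hgeom
      rw [hIcc]
      have heq : ∑ k ∈ Finset.Ico 1 l, ζ ^ (k * (r + 1))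
          = ∑ k ∈ Finset.Ico 1 l, (ζ ^ (r + 1)) ^ k := by
        apply Finset.sum_congr rfl; intro k _; rw [← pow_mul, mul_comm]
      rw [heq]
      simp only [pow_zero] at hgeom
      linear_combination hgeom
    have hstep : ∑ k ∈ Finset.Icc 1 (l - 1), ζ ^ (k * (r + 1)) / (1 - ζ ^ (-(k : ℤ)))
        = (∑ k ∈ Finset.Icc 1 (l - 1), ζ ^ (k * r) / (1 - ζ ^ (-(k : ℤ))))
          + ∑ k ∈ Finset.Icc 1 (l - 1), ζ ^ (k * (r + 1)) := by
      rw [← Finset.sum_add_distrib]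
      apply Finset.sum_congr rfl
      intro k hk
      simp only [Finset.mem_Icc] at hk
      have hk1 : ζ ^ k ≠ 1 := hζ.pow_ne_one_of_pos_of_lt (by omega) (by omega)
      have hpk : ζ ^ k ≠ 0 := pow_ne_zero _ hζ0
      have hne2 : ζ ^ k - 1 ≠ 0 := sub_ne_zero.mpr hk1
      have hz : ζ ^ (-(k : ℤ)) = (ζ ^ k)⁻¹ := by rw [zpow_neg, zpow_natCast]
      have hexp : ζ ^ (k * (r + 1)) = ζ ^ (k * r) * ζ ^ k := by
        rw [Nat.mul_succ, pow_add]
      rw [hz, inv_denom_rw hζ0, hexp, div_div_eq_mul_div, div_div_eq_mul_div]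
      field_simp
      try ring
    rw [hstep, ih hr', hsum1]
    push_cast
    ring

/-- For `l ≥ 2`, `m ≥ 0`, `ζ = exp(2πi/l)` and `q = ⌊m/l⌋`,
`∑_{k=1}^{l-1} ζ^{k·m}/(1 - ζ^{-k}) = -m + (l-1)/2 + l·q` in `ℂ`. -/
theorem stmt4 (l m : ℕ) (hl : 2 ≤ l) (ζ : ℂ)
    (hζ : ζ = Complex.exp (2 * (Real.pi : ℂ) * Complex.I / l)) :
    ∑ k ∈ Finset.Icc 1 (l - 1), ζ ^ (k * m) / (1 - ζ ^ (-(k : ℤ))) =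
      -(m : ℂ) + ((l : ℂ) - 1) / 2 + (l : ℂ) * ((m / l : ℕ) : ℂ) := by
  have hprim : IsPrimitiveRoot ζ l := by
    rw [hζ]
    have := Complex.isPrimitiveRoot_exp l (by omega)
    convert this using 2
    try ring
  set q := m / l with hq
  set r := m % l with hrdef
  have hm : m = l * q + r := (Nat.div_add_mod m l).symm
  have hrl : r < l := Nat.mod_lt _ (by omega)
  have hexp : ∀ k, ζ ^ (k * m) = ζ ^ (k * r) := by
    intro k
    rw [hm]
    rw [show k * (l * q + r) = l * (k * q) + k * r by ring, pow_add, pow_mul,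
      hprim.pow_eq_one, one_pow, one_mul]
  have hsum : ∑ k ∈ Finset.Icc 1 (l - 1), ζ ^ (k * m) / (1 - ζ ^ (-(k : ℤ)))
      = ∑ k ∈ Finset.Icc 1 (l - 1), ζ ^ (k * r) / (1 - ζ ^ (-(k : ℤ))) := by
    apply Finset.sum_congr rfl; intro k _; rw [hexp]
  rw [hsum, key_lemma hl hprim r hrl]
  have hmc : (m : ℂ) = (l : ℂ) * q + r := by
    rw [hm]; push_cast; ring
  rw [hmc]
  try ring
end

section
/- Let l ≥ 2 and m ≥ 0 be integers, ζ = exp(2πi/l). Define κ(l,m) to be the number of natural numbers n with (m mod l) + l·n ≤ 2m, and μ(l,m) = (1/l)·∑_{k=1}^{l-1} ζ^{k m}/(1 - ζ^{-k}). Then κ(l,m) = (2m+1)/l + 2·μ(l,m), as an identity of complex numbers. -/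
open Finset

private lemma mod_succ_dvd (l m : ℕ) (hl : 2 ≤ l) (hdvd : l ∣ (m + 1)) :
    (m + 1) % l = 0 ∧ m % l = l - 1 := by
  obtain ⟨c, hc⟩ := hdvd
  have hc1 : 1 ≤ c := by
    rcases Nat.eq_zero_or_pos c with h | h
    · subst h; simp at hc
    · exact h
  obtain ⟨d, rfl⟩ : ∃ d, c = d + 1 := ⟨c - 1, by omega⟩
  rw [Nat.mul_succ] at hc
  constructor
  · rw [hc, ← Nat.mul_succ]; exact Nat.mul_mod_right l _
  · have hm : m = l * d + (l - 1) := by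
      set X := l * d with hX
      omega
    rw [hm, Nat.mul_add_mod, Nat.mod_eq_of_lt (by omega)]

private lemma mod_succ_not_dvd (l m : ℕ) (hl : 2 ≤ l) (hdvd : ¬ l ∣ (m + 1)) :
    (m + 1) % l = m % l + 1 := by
  have hr : m % l < l := Nat.mod_lt _ (by omega)
  have hne : m % l ≠ l - 1 := by
    intro heq
    apply hdvd
    refine ⟨m / l + 1, ?_⟩
    have hdm := Nat.div_add_mod m l
    rw [Nat.mul_succ]
    set X := l * (m / l) with hX
    omega
  rw [Nat.add_mod, Nat.mod_eq_of_lt (show 1 < l by omega),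
    Nat.mod_eq_of_lt (show m % l + 1 < l by omega)]

private lemma helperdiv (a w : ℂ) (hw0 : w ≠ 0) (hs : 1 - w⁻¹ ≠ 0) :
    a * w / (1 - w⁻¹) = a / (1 - w⁻¹) + a * w := by
  have hw : w⁻¹ * w = 1 := inv_mul_cancel₀ hw0
  rw [div_add' _ _ _ hs, div_eq_div_iff hs hs]
  linear_combination (a - a * w⁻¹) * hw

lemma keysum (l : ℕ) (hl : 2 ≤ l) (ζ : ℂ) (hprim : IsPrimitiveRoot ζ l) (m : ℕ) :
    ∑ k ∈ Finset.Icc 1 (l - 1), ζ ^ (k * m) / (1 - ζ ^ (-(k : ℤ)))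
      = ((l : ℂ) - 1) / 2 - ((m % l : ℕ) : ℂ) := by
  have hζ0 : ζ ≠ 0 := hprim.ne_zero (by omega)
  have hpow1 : ∀ k ∈ Finset.Icc 1 (l - 1), ζ ^ k ≠ 1 := by
    intro k hk
    rw [Finset.mem_Icc] at hk
    exact hprim.pow_ne_one_of_pos_of_lt (by omega) (by omega)
  have hden : ∀ k ∈ Finset.Icc 1 (l - 1), 1 - ζ ^ (-(k : ℤ)) ≠ 0 := by
    intro k hk
    rw [zpow_neg, zpow_natCast, sub_ne_zero]
    intro h
    exact hpow1 k hk (by rw [← inv_inv (ζ ^ k), ← h, inv_one])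
  have hne1' : ∀ k ∈ Finset.Icc 1 (l - 1), (-1 : ℂ) + ζ ^ k ≠ 0 := by
    intro k hk h
    exact hpow1 k hk (by linear_combination h)
  induction m with
  | zero =>
      simp only [Nat.mul_zero, pow_zero, Nat.zero_mod, Nat.cast_zero, sub_zero]
      have hre : ∑ k ∈ Finset.Icc 1 (l - 1), 1 / (1 - ζ ^ (-(k : ℤ)))
          = ∑ k ∈ Finset.Icc 1 (l - 1), 1 / (1 - ζ ^ (-((l - k : ℕ) : ℤ))) := by
        refine Finset.sum_nbij' (fun k => l - k) (fun k => l - k) ?_ ?_ ?_ ?_ ?_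
        · intro a ha; simp only [Finset.mem_Icc] at ha ⊢; omega
        · intro a ha; simp only [Finset.mem_Icc] at ha ⊢; omega
        · intro a ha; simp only [Finset.mem_Icc] at ha; omega
        · intro a ha; simp only [Finset.mem_Icc] at ha; omega
        · intro a ha; simp only [Finset.mem_Icc] at ha
          have h : l - (l - a) = a := by omega
          simp only [h]
      have hsum2 : (∑ k ∈ Finset.Icc 1 (l - 1), 1 / (1 - ζ ^ (-(k : ℤ))))
          + (∑ k ∈ Finset.Icc 1 (l - 1), 1 / (1 - ζ ^ (-(k : ℤ)))) = (l : ℂ) - 1 := by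
        nth_rewrite 2 [hre]
        rw [← Finset.sum_add_distrib]
        have key : ∀ k ∈ Finset.Icc 1 (l - 1),
            1 / (1 - ζ ^ (-(k : ℤ))) + 1 / (1 - ζ ^ (-((l - k : ℕ) : ℤ))) = 1 := by
          intro k hk
          have hk' := hk
          rw [Finset.mem_Icc] at hk'
          have h1 : ζ ^ ((l - k : ℕ)) * ζ ^ k = 1 := by
            rw [← pow_add]
            have h : l - k + k = l := by omega
            rw [h, hprim.pow_eq_one]
          have h2 : ζ ^ (-((l - k : ℕ) : ℤ)) = ζ ^ k := by
            rw [zpow_neg, zpow_natCast, inv_eq_iff_eq_inv, eq_inv_of_mul_eq_one_left h1]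
          rw [h2, zpow_neg, zpow_natCast]
          have hne1 : ζ ^ k ≠ 1 := hpow1 k hk
          have hne0 : (ζ : ℂ) ^ k ≠ 0 := pow_ne_zero _ hζ0
          have hs1 : 1 - (ζ ^ k)⁻¹ ≠ 0 := by
            have := hden k hk; rwa [zpow_neg, zpow_natCast] at this
          have hs2 : 1 - ζ ^ k ≠ 0 := sub_ne_zero.mpr (Ne.symm hne1)
          have hw : (ζ ^ k)⁻¹ * ζ ^ k = 1 := inv_mul_cancel₀ hne0
          rw [div_add_div _ _ hs1 hs2, div_eq_iff (mul_ne_zero hs1 hs2)]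
          linear_combination -hw
        rw [Finset.sum_congr rfl key, Finset.sum_const, Nat.card_Icc]
        simp only [nsmul_eq_mul, mul_one]
        have h : l - 1 + 1 - 1 = l - 1 := by omega
        rw [h, Nat.cast_sub (by omega : 1 ≤ l), Nat.cast_one]
      linear_combination hsum2 / 2
  | succ m ih =>
      have hstep : ∀ k ∈ Finset.Icc 1 (l - 1),
          ζ ^ (k * (m + 1)) / (1 - ζ ^ (-(k : ℤ)))
            = ζ ^ (k * m) / (1 - ζ ^ (-(k : ℤ))) + ζ ^ (k * (m + 1)) := by
        intro k hk
        have hne0 : (ζ : ℂ) ^ k ≠ 0 := pow_ne_zero _ hζ0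
        have hs1 := hden k hk
        rw [zpow_neg, zpow_natCast] at hs1 ⊢
        have hexp : k * (m + 1) = k * m + k := by ring
        rw [hexp, pow_add]
        exact helperdiv (ζ ^ (k * m)) (ζ ^ k) hne0 hs1
      rw [Finset.sum_congr rfl hstep, Finset.sum_add_distrib, ih]
      have hIcc : Finset.Icc 1 (l - 1) = Finset.Ico 1 l := by
        rw [← Finset.Ico_add_one_right_eq_Icc]
        congr 1
        omega
      have hgeom : ∑ k ∈ Finset.Icc 1 (l - 1), ζ ^ (k * (m + 1))
          = (if l ∣ (m + 1) then (l : ℂ) else 0) - 1 := by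
        have hfull : ∑ k ∈ Finset.range l, (ζ ^ (m + 1)) ^ k
            = if l ∣ (m + 1) then (l : ℂ) else 0 := by
          by_cases hdvd : l ∣ (m + 1)
          · rw [if_pos hdvd]
            have h : ζ ^ (m + 1) = 1 := (hprim.pow_eq_one_iff_dvd _).mpr hdvd
            simp [h]
          · rw [if_neg hdvd]
            have hne1 : ζ ^ (m + 1) ≠ 1 := fun h => hdvd ((hprim.pow_eq_one_iff_dvd _).mp h)
            rw [geom_sum_eq hne1]
            have h : (ζ ^ (m + 1)) ^ l = 1 := by
              rw [← pow_mul, mul_comm, pow_mul, hprim.pow_eq_one, one_pow]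
            rw [h]
            simp
        have hsplit : ∑ k ∈ Finset.range l, (ζ ^ (m + 1)) ^ k
            = 1 + ∑ k ∈ Finset.Icc 1 (l - 1), ζ ^ (k * (m + 1)) := by
          rw [hIcc, Finset.range_eq_Ico, Finset.sum_eq_sum_Ico_succ_bot (by omega : 0 < l)]
          simp only [pow_zero]
          congr 1
          apply Finset.sum_congr rfl
          intro k _
          rw [← pow_mul, mul_comm]
        rw [hsplit] at hfull
        linear_combination hfull
      rw [hgeom]
      by_cases hdvd : l ∣ (m + 1)
      · rw [if_pos hdvd]
        obtain ⟨h1, h2⟩ := mod_succ_dvd l m hl hdvd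
        rw [h1, h2, Nat.cast_sub (by omega : 1 ≤ l), Nat.cast_zero, Nat.cast_one]
        ring
      · rw [if_neg hdvd]
        rw [mod_succ_not_dvd l m hl hdvd]
        push_cast
        ring

private lemma card_eq (l m : ℕ) (hl : 2 ≤ l) :
    Nat.card {n : ℕ | m % l + l * n ≤ 2 * m} = 2 * (m / l) + 1 := by
  have hdm := Nat.div_add_mod m l
  have hr : m % l < l := Nat.mod_lt _ (by omega)
  have hset : {n : ℕ | m % l + l * n ≤ 2 * m} = Set.Iic (2 * (m / l)) := by
    ext n
    simp only [Set.mem_setOf_eq, Set.mem_Iic]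
    constructor
    · intro h
      by_contra hn
      push_neg at hn
      have h2 : l * (2 * (m / l) + 1) ≤ l * n := Nat.mul_le_mul_left _ hn
      have e1 : l * (2 * (m / l) + 1) = 2 * (l * (m / l)) + l := by ring
      set X := l * (m / l) with hX
      set Y := l * n with hY
      omega
    · intro h
      have h2 : l * n ≤ l * (2 * (m / l)) := Nat.mul_le_mul_left _ h
      have e1 : l * (2 * (m / l)) = 2 * (l * (m / l)) := by ring
      set X := l * (m / l) with hX
      set Y := l * n with hY
      omega
  rw [hset, ← Finset.coe_Iic, Nat.card_coe_set_eq, Set.ncard_coe_finset, Nat.card_Iic]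

/-- For `l ≥ 2`, `m ≥ 0` and `ζ = exp(2πi/l)`, with
`κ(l,m) = #{n ∈ ℕ : (m mod l) + l·n ≤ 2m}` and
`μ(l,m) = (1/l)·∑_{k=1}^{l-1} ζ^{km}/(1 - ζ^{-k})`, one has
`κ(l,m) = (2m+1)/l + 2·μ(l,m)` in `ℂ`. -/
theorem stmt6 (l m : ℕ) (hl : 2 ≤ l) (ζ : ℂ)
    (hζ : ζ = Complex.exp (2 * (Real.pi : ℂ) * Complex.I / l)) :
    (Nat.card {n : ℕ | m % l + l * n ≤ 2 * m} : ℂ) =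
      (2 * (m : ℂ) + 1) / (l : ℂ) +
        2 * ((1 / (l : ℂ)) *
          ∑ k ∈ Finset.Icc 1 (l - 1), ζ ^ (k * m) / (1 - ζ ^ (-(k : ℤ)))) := by
  have hprim : IsPrimitiveRoot ζ l := by
    rw [hζ]; exact Complex.isPrimitiveRoot_exp l (by omega)
  rw [card_eq l m hl, keysum l hl ζ hprim m]
  have hl0 : (l : ℂ) ≠ 0 := Nat.cast_ne_zero.mpr (by omega)
  have hdm := Nat.div_add_mod m l
  have hdmC : (l : ℂ) * ((m / l : ℕ) : ℂ) + ((m % l : ℕ) : ℂ) = (m : ℂ) := by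
    exact_mod_cast congrArg (Nat.cast : ℕ → ℂ) hdm
  push_cast
  field_simp
  linear_combination 2 * hdmC
end
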